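/- Let 0 < α < β < 1, let a ∈ ℝ, and let φ : ℝ → ℝ be a 2π-periodic function of class C^{1,β}. For t ≠ 0 set δ₋φ(s,t) = (φ(s) − φ(s−t))/|t| and δ₊φ(s,t) = (φ(s) − φ(s+t))/|t|, and let F₃(a,q,p) = ∫_0^1 ( 1 + a² (−p + (q+p)τ)² )^{−(2+α)/2} dτ. Then for every s ∈ ℝ the function t ↦ ( δ₋φ(s,t) + δ₊φ(s,t) ) · F₃(a, δ₋φ(s,t), δ₊φ(s,t)) · |t|^{−1−α} is Lebesgue integrable on ℝ, and, setting Φ₁(a,φ)(s) = (1/2) ∫_ℝ ( δ₋φ(s,t) + δ₊φ(s,t) ) F₃(a, δ₋φ(s,t), δ₊φ(s,t)) |t|^{−1−α} dt, there exists a constant C, depending only on α, β and an upper bound for |a| + ‖φ‖_{C^{1,β}}, such that ‖Φ₁(a,φ)‖_{L^∞(ℝ)} ≤ C and |Φ₁(a,φ)(s) − Φ₁(a,φ)(s̄)| ≤ C |s − s̄|^{β−α} for all s, s̄ ∈ ℝ. -/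

import Mathlib

open MeasureTheory Real

/-- First-order incremental quotient `δ₋φ(s,t) = (φ(s) − φ(s−t))/|t|`. -/
noncomputable def deltaMinus (φ : ℝ → ℝ) (s t : ℝ) : ℝ := (φ s - φ (s - t)) / |t|

/-- First-order incremental quotient `δ₊φ(s,t) = (φ(s) − φ(s+t))/|t|`. -/
noncomputable def deltaPlus (φ : ℝ → ℝ) (s t : ℝ) : ℝ := (φ s - φ (s + t)) / |t|

/-- `F₃(a,q,p) = ∫_0^1 (1 + a²(−p+(q+p)τ)²)^{−(2+α)/2} dτ`. -/
noncomputable def F3 (α a q p : ℝ) : ℝ :=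
  ∫ τ in (0:ℝ)..1, (1 + a ^ 2 * (-p + (q + p) * τ) ^ 2) ^ (-(2 + α) / 2)

/-- The integrand of the operator `Φ₁`. -/
noncomputable def Phi1Integrand (α a : ℝ) (φ : ℝ → ℝ) (s t : ℝ) : ℝ :=
  (deltaMinus φ s t + deltaPlus φ s t) *
    F3 α a (deltaMinus φ s t) (deltaPlus φ s t) * |t| ^ (-(1 + α))

/-- `Φ₁(a,φ)(s) = (1/2) ∫_ℝ (δ₋φ + δ₊φ) F₃(a, δ₋φ, δ₊φ) |t|^{−1−α} dt`. -/
noncomputable def Phi1 (α a : ℝ) (φ : ℝ → ℝ) (s : ℝ) : ℝ :=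
  (1 / 2) * ∫ t : ℝ, Phi1Integrand α a φ s t

/-!
Since `|F₃| ≤ 1`, the integrand is controlled by the symmetric difference `δ₋φ + δ₊φ`, which is
`O(|t|^β)` by the Hölder continuity of `φ'` and `O(1/|t|)` by the boundedness of `φ`. So the
integrand is `O(|t|^{β-1-α})` near `0` and `O(|t|^{-2-α})` at infinity, which gives integrability
and the `L^∞` bound.

For the Hölder bound, split the `t`-integral at `|t| = |s - s̄|`. Inside, each of the two integrands
is bounded separately. Outside, `F₃` is Lipschitz in `(q, p)` and `s ↦ δ±φ(s, t)` is Lipschitz with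
constant `O(1/|t|)`, so the difference of the integrands is `O(|s - s̄| |t|^{β-2-α})`. Both pieces
contribute `O(|s - s̄|^{β-α})`.
-/

open Set

lemma integrable_comp_abs_iff {w : ℝ → ℝ} :
    Integrable (fun t => w |t|) ↔ IntegrableOn w (Ioi 0) := by
  simpa using integrable_fun_norm_addHaar (volume : Measure ℝ) (f := w)

lemma integrable_and_abs_integral_le_of_abs_le_comp_abs {g w : ℝ → ℝ}
    (hg : AEStronglyMeasurable g) (hw : IntegrableOn w (Ioi 0)) (hgw : ∀ᵐ t, |g t| ≤ w |t|) :
    Integrable g ∧ |∫ t, g t| ≤ 2 * ∫ y in Ioi 0, w y := by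
  have hw' : Integrable (fun t => w |t|) := integrable_comp_abs_iff.2 hw
  refine ⟨hw'.mono' hg hgw, ?_⟩
  rw [← integral_comp_abs]
  simpa only [Real.norm_eq_abs] using
    norm_integral_le_of_norm_le (f := g) hw' (by simpa only [Real.norm_eq_abs] using hgw)

noncomputable def nearFarWeight (M₁ c M₂ d r : ℝ) : ℝ → ℝ :=
  (Iic r).indicator (fun y => M₁ * y ^ c) + (Ioi r).indicator (fun y => M₂ * y ^ d)

lemma integrableOn_nearFarWeight_and_integral {c d r : ℝ} (M₁ M₂ : ℝ) (hc : -1 < c)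
    (hd : d < -1) (hr : 0 < r) :
    IntegrableOn (nearFarWeight M₁ c M₂ d r) (Ioi 0) ∧
      ∫ y in Ioi 0, nearFarWeight M₁ c M₂ d r y =
        M₁ * (r ^ (c + 1) / (c + 1)) + M₂ * (-r ^ (d + 1) / (d + 1)) := by
  have near_set : Ioi (0:ℝ) ∩ Iic r = Ioc 0 r := Ioi_inter_Iic
  have far_set : Ioi (0:ℝ) ∩ Ioi r = Ioi r := Ioi_inter_Ioi.trans (by rw [max_eq_right hr.le])
  have hnear : IntegrableOn (fun y => M₁ * y ^ c) (Ioc 0 r) :=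
    (intervalIntegral.intervalIntegrable_rpow' hc (a := 0) (b := r)).1.const_mul M₁
  have hfar : IntegrableOn (fun y => M₂ * y ^ d) (Ioi r) :=
    (integrableOn_Ioi_rpow_of_lt hd hr).const_mul M₂
  have hnear' : IntegrableOn ((Iic r).indicator (fun y => M₁ * y ^ c)) (Ioi 0) := by
    rw [integrableOn_indicator_iff measurableSet_Iic, inter_comm, near_set]; exact hnear
  have hfar' : IntegrableOn ((Ioi r).indicator (fun y => M₂ * y ^ d)) (Ioi 0) := by
    rw [integrableOn_indicator_iff measurableSet_Ioi, inter_comm, far_set]; exact hfar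
  refine ⟨hnear'.add hfar', ?_⟩
  rw [nearFarWeight, Pi.add_def, integral_add hnear' hfar', setIntegral_indicator measurableSet_Iic,
    setIntegral_indicator measurableSet_Ioi, near_set, far_set, integral_const_mul,
    integral_const_mul, integral_Ioi_rpow_of_lt hd hr, ← intervalIntegral.integral_of_le hr.le,
    integral_rpow (Or.inl hc), zero_rpow (by linarith), sub_zero]

lemma integrable_and_abs_integral_le_of_near_far {g : ℝ → ℝ} {c d r M₁ M₂ : ℝ} (hc : -1 < c)
    (hd : d < -1) (hr : 0 < r) (hg : AEStronglyMeasurable g)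
    (hnear : ∀ t, t ≠ 0 → |t| ≤ r → |g t| ≤ M₁ * |t| ^ c)
    (hfar : ∀ t, r < |t| → |g t| ≤ M₂ * |t| ^ d) :
    Integrable g ∧
      |∫ t, g t| ≤ 2 * (M₁ * (r ^ (c + 1) / (c + 1)) + M₂ * (-r ^ (d + 1) / (d + 1))) := by
  obtain ⟨hw, hw_int⟩ := integrableOn_nearFarWeight_and_integral M₁ M₂ hc hd hr
  rw [← hw_int]
  refine integrable_and_abs_integral_le_of_abs_le_comp_abs hg hw ?_
  filter_upwards [Measure.ae_ne volume 0] with t ht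
  by_cases htr : |t| ≤ r
  · simpa [nearFarWeight, htr] using hnear t ht htr
  · have htr' : r < |t| := not_le.1 htr
    simpa [nearFarWeight, htr, htr'] using hfar t htr'

lemma abs_one_add_sq_rpow_sub_le {e : ℝ} (he : e ≤ 1 / 2) (x y : ℝ) :
    |(1 + x ^ 2) ^ e - (1 + y ^ 2) ^ e| ≤ 2 * |e| * |x - y| := by
  have hpos : ∀ z : ℝ, 0 < 1 + z ^ 2 := fun z => by positivity
  have hderiv : ∀ z : ℝ, HasDerivAt (fun z : ℝ => (1 + z ^ 2) ^ e)
      (2 * z * e * (1 + z ^ 2) ^ (e - 1)) z := fun z => by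
    simpa [mul_comm, mul_left_comm, mul_assoc] using
      (((hasDerivAt_pow 2 z).const_add 1).rpow_const (p := e) (Or.inl (hpos z).ne'))
  have hbound : ∀ z : ℝ, ‖2 * z * e * (1 + z ^ 2) ^ (e - 1)‖ ≤ 2 * |e| := fun z => by
    have hz : |z| ≤ (1 + z ^ 2) ^ (1 / 2 : ℝ) := by
      rw [← sqrt_eq_rpow, ← sqrt_sq_eq_abs]
      exact sqrt_le_sqrt (by linarith)
    calc ‖2 * z * e * (1 + z ^ 2) ^ (e - 1)‖ = 2 * |e| * (|z| * (1 + z ^ 2) ^ (e - 1)) := by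
          rw [Real.norm_eq_abs, abs_mul, abs_mul, abs_mul, abs_two,
            abs_of_pos (rpow_pos_of_pos (hpos z) _)]; ring
      _ ≤ 2 * |e| * ((1 + z ^ 2) ^ (1 / 2 : ℝ) * (1 + z ^ 2) ^ (e - 1)) := by gcongr
      _ = 2 * |e| * (1 + z ^ 2) ^ (e - 1 / 2) := by
          rw [← rpow_add (hpos z)]; ring_nf
      _ ≤ 2 * |e| * 1 := by
          gcongr
          exact rpow_le_one_of_one_le_of_nonpos (by nlinarith) (by linarith)
      _ = 2 * |e| := mul_one _
  simpa [Real.norm_eq_abs] using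
    convex_univ.norm_image_sub_le_of_norm_hasDerivWithin_le
      (fun z _ => (hderiv z).hasDerivWithinAt) (fun z _ => hbound z) (mem_univ y) (mem_univ x)

lemma continuous_F3 (α a : ℝ) : Continuous fun z : ℝ × ℝ => F3 α a z.1 z.2 := by
  unfold F3
  apply intervalIntegral.continuous_parametric_intervalIntegral_of_continuous'
  exact Continuous.rpow_const (by fun_prop) fun _ => Or.inl (by positivity)

lemma abs_F3_le_one {α : ℝ} (hα : -2 ≤ α) (a q p : ℝ) : |F3 α a q p| ≤ 1 := by
  have h := intervalIntegral.norm_integral_le_of_norm_le_const (a := 0) (b := 1) (C := 1)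
    (f := fun τ : ℝ => (1 + a ^ 2 * (-p + (q + p) * τ) ^ 2) ^ (-(2 + α) / 2)) fun τ _ => by
      rw [Real.norm_eq_abs, abs_of_nonneg (by positivity)]
      exact rpow_le_one_of_one_le_of_nonpos (by nlinarith [sq_nonneg (a * (-p + (q + p) * τ))])
        (by linarith)
  simpa [F3] using h

lemma abs_F3_sub_le {α : ℝ} (hα : -2 ≤ α) (a q p q' p' : ℝ) :
    |F3 α a q p - F3 α a q' p'| ≤ (2 + α) * |a| * (|q - q'| + |p - p'|) := by
  set k : ℝ → ℝ := fun X => (1 + a ^ 2 * X ^ 2) ^ (-(2 + α) / 2)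
  have hk : Continuous k := Continuous.rpow_const (by fun_prop) fun _ => Or.inl (by positivity)
  have hL : 0 ≤ (2 + α) * |a| := mul_nonneg (by linarith) (abs_nonneg a)
  have hk_lip : ∀ X Y, |k X - k Y| ≤ (2 + α) * |a| * |X - Y| := fun X Y => by
    have he : 2 * |-(2 + α) / 2| = 2 + α := by
      rw [abs_div, abs_neg, abs_two, abs_of_nonneg (by linarith)]; ring
    have h := abs_one_add_sq_rpow_sub_le (e := -(2 + α) / 2) (by linarith) (a * X) (a * Y)
    rwa [he, ← mul_sub, abs_mul, ← mul_assoc, mul_pow, mul_pow] at h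
  have hdiff : F3 α a q p - F3 α a q' p' =
      ∫ τ in (0:ℝ)..1, (k (-p + (q + p) * τ) - k (-p' + (q' + p') * τ)) :=
    (intervalIntegral.integral_sub ((hk.comp (by fun_prop)).intervalIntegrable 0 1)
      ((hk.comp (by fun_prop)).intervalIntegrable 0 1)).symm
  have h := intervalIntegral.norm_integral_le_of_norm_le_const (a := 0) (b := 1)
    (C := (2 + α) * |a| * (|q - q'| + |p - p'|))
    (f := fun τ => k (-p + (q + p) * τ) - k (-p' + (q' + p') * τ)) fun τ hτ => by
      rw [uIoc_of_le zero_le_one] at hτ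
      obtain ⟨hτ0, hτ1⟩ := hτ
      have hsplit : (-p + (q + p) * τ) - (-p' + (q' + p') * τ) =
          τ * (q - q') - (1 - τ) * (p - p') := by ring
      calc ‖k (-p + (q + p) * τ) - k (-p' + (q' + p') * τ)‖
          ≤ (2 + α) * |a| * |τ * (q - q') - (1 - τ) * (p - p')| := by
            rw [Real.norm_eq_abs, ← hsplit]; exact hk_lip _ _
        _ ≤ (2 + α) * |a| * (|q - q'| + |p - p'|) := by
            refine mul_le_mul_of_nonneg_left ?_ hL
            calc |τ * (q - q') - (1 - τ) * (p - p')|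
                ≤ τ * |q - q'| + (1 - τ) * |p - p'| := by
                  refine (abs_sub _ _).trans ?_
                  rw [abs_mul τ, abs_mul (1 - τ), abs_of_pos hτ0,
                    abs_of_nonneg (by linarith : 0 ≤ 1 - τ)]
              _ ≤ |q - q'| + |p - p'| := by
                  nlinarith [abs_nonneg (q - q'), abs_nonneg (p - p')]
  rw [hdiff]
  simpa using h

lemma deltaMinus_neg (φ : ℝ → ℝ) (s t : ℝ) : deltaMinus φ s (-t) = deltaPlus φ s t := by
  simp [deltaMinus, deltaPlus]

lemma deltaMinus_add_deltaPlus (φ : ℝ → ℝ) (s t : ℝ) :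
    deltaMinus φ s t + deltaPlus φ s t = deltaMinus φ s t - deltaMinus φ (s + t) t := by
  simp only [deltaMinus, deltaPlus, add_sub_cancel_right]; ring

section DifferenceQuotients

variable {φ : ℝ → ℝ} {β K : ℝ}

lemma abs_deltaMinus_le (hK : ∀ s, |φ s| ≤ K) (s t : ℝ) :
    |deltaMinus φ s t| ≤ 2 * K / |t| := by
  rw [deltaMinus, abs_div, abs_abs]
  gcongr
  linarith [abs_sub (φ s) (φ (s - t)), hK s, hK (s - t)]

lemma abs_deltaMinus_sub_deltaMinus_le (hφ : Differentiable ℝ φ) {t M : ℝ}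
    (hM : ∀ u, |deriv φ u - deriv φ (u - t)| ≤ M) (s s' : ℝ) :
    |deltaMinus φ s t - deltaMinus φ s' t| ≤ M * |s - s'| / |t| := by
  have hderiv : ∀ u, HasDerivAt (fun u => φ u - φ (u - t)) (deriv φ u - deriv φ (u - t)) u :=
    fun u => (hφ u).hasDerivAt.sub (by simpa using ((hφ (u - t)).hasDerivAt.comp_sub_const u t))
  have hmvt := convex_univ.norm_image_sub_le_of_norm_hasDerivWithin_le
    (fun u _ => (hderiv u).hasDerivWithinAt) (fun u _ => hM u) (mem_univ s') (mem_univ s)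
  rw [deltaMinus, deltaMinus, div_sub_div_same, abs_div, abs_abs]
  gcongr
  simpa only [Real.norm_eq_abs] using hmvt

lemma abs_deltaPlus_sub_deltaPlus_le (hφ : Differentiable ℝ φ) {t M : ℝ}
    (hM : ∀ u, |deriv φ u - deriv φ (u + t)| ≤ M) (s s' : ℝ) :
    |deltaPlus φ s t - deltaPlus φ s' t| ≤ M * |s - s'| / |t| := by
  rw [← deltaMinus_neg, ← deltaMinus_neg, ← abs_neg t]
  exact abs_deltaMinus_sub_deltaMinus_le hφ (by simpa using hM) s s'

lemma abs_deltaMinus_add_deltaPlus_le_of_holder (hφ : Differentiable ℝ φ)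
    (hK : ∀ u v, |deriv φ u - deriv φ v| ≤ K * |u - v| ^ β) {t : ℝ} (ht : t ≠ 0) (s : ℝ) :
    |deltaMinus φ s t + deltaPlus φ s t| ≤ K * |t| ^ β := by
  have h := abs_deltaMinus_sub_deltaMinus_le hφ (M := K * |t| ^ β)
    (fun u => by simpa using hK u (u - t)) s (s + t)
  rwa [← deltaMinus_add_deltaPlus, sub_add_cancel_left, abs_neg,
    mul_div_cancel_right₀ _ (abs_ne_zero.2 ht)] at h

lemma abs_deltaMinus_add_deltaPlus_le_of_bounded (hK : ∀ s, |φ s| ≤ K) (s t : ℝ) :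
    |deltaMinus φ s t + deltaPlus φ s t| ≤ 4 * K / |t| := by
  have h₁ := abs_deltaMinus_le hK s t
  have h₂ := abs_deltaMinus_le hK s (-t)
  rw [deltaMinus_neg, abs_neg] at h₂
  calc |deltaMinus φ s t + deltaPlus φ s t| ≤ 2 * K / |t| + 2 * K / |t| :=
        (abs_add_le _ _).trans (add_le_add h₁ h₂)
    _ = 4 * K / |t| := by ring

lemma abs_deltaMinus_add_deltaPlus_sub_le (hφ : Differentiable ℝ φ)
    (hK : ∀ u v, |deriv φ u - deriv φ v| ≤ K * |u - v| ^ β) (s s' t : ℝ) :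
    |(deltaMinus φ s t + deltaPlus φ s t) - (deltaMinus φ s' t + deltaPlus φ s' t)| ≤
      2 * K * |t| ^ β * |s - s'| / |t| := by
  have hminus := abs_deltaMinus_sub_deltaMinus_le hφ (M := K * |t| ^ β)
    (fun u => by simpa using hK u (u - t)) s s'
  have hplus := abs_deltaPlus_sub_deltaPlus_le hφ (M := K * |t| ^ β)
    (fun u => by simpa using hK u (u + t)) s s'
  calc _ = |(deltaMinus φ s t - deltaMinus φ s' t) + (deltaPlus φ s t - deltaPlus φ s' t)| := by
        ring_nf
    _ ≤ K * |t| ^ β * |s - s'| / |t| + K * |t| ^ β * |s - s'| / |t| :=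
        (abs_add_le _ _).trans (add_le_add hminus hplus)
    _ = _ := by ring

end DifferenceQuotients

section IntegrandBounds

variable {α β a K₀ K₁ K₂ : ℝ} {φ : ℝ → ℝ}

lemma abs_Phi1Integrand_le (hα : -2 ≤ α) {M : ℝ} {s t : ℝ}
    (hM : |deltaMinus φ s t + deltaPlus φ s t| ≤ M) :
    |Phi1Integrand α a φ s t| ≤ M * |t| ^ (-(1 + α)) := by
  rw [Phi1Integrand, abs_mul, abs_mul, abs_of_nonneg (rpow_nonneg (abs_nonneg t) _)]
  exact mul_le_mul_of_nonneg_right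
    ((mul_le_of_le_one_right (abs_nonneg _) (abs_F3_le_one hα _ _ _)).trans hM)
    (rpow_nonneg (abs_nonneg t) _)

lemma abs_Phi1Integrand_le_of_holder (hα : -2 ≤ α) (hφ : Differentiable ℝ φ)
    (hK₂ : ∀ u v, |deriv φ u - deriv φ v| ≤ K₂ * |u - v| ^ β) {t : ℝ} (ht : t ≠ 0) (s : ℝ) :
    |Phi1Integrand α a φ s t| ≤ K₂ * |t| ^ (β - 1 - α) := by
  refine (abs_Phi1Integrand_le hα (abs_deltaMinus_add_deltaPlus_le_of_holder hφ hK₂ ht s)).trans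
    (le_of_eq ?_)
  rw [mul_assoc, ← rpow_add (abs_pos.2 ht)]
  ring_nf

lemma abs_Phi1Integrand_le_of_bounded (hα : -2 ≤ α) (hK₀ : ∀ s, |φ s| ≤ K₀) {t : ℝ}
    (ht : t ≠ 0) (s : ℝ) :
    |Phi1Integrand α a φ s t| ≤ 4 * K₀ * |t| ^ (-2 - α) := by
  refine (abs_Phi1Integrand_le hα (abs_deltaMinus_add_deltaPlus_le_of_bounded hK₀ s t)).trans
    (le_of_eq ?_)
  rw [div_eq_mul_inv, ← rpow_neg_one, mul_assoc, ← rpow_add (abs_pos.2 ht)]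
  ring_nf

lemma abs_F3_deltas_sub_le (hα : -2 ≤ α) (hφ : Differentiable ℝ φ)
    (hK₁ : ∀ s, |deriv φ s| ≤ K₁) (a s s' t : ℝ) :
    |F3 α a (deltaMinus φ s t) (deltaPlus φ s t) - F3 α a (deltaMinus φ s' t) (deltaPlus φ s' t)| ≤
      4 * (2 + α) * |a| * K₁ * |s - s'| / |t| := by
  have hK₁' : ∀ u v, |deriv φ u - deriv φ v| ≤ 2 * K₁ := fun u v => by
    linarith [abs_sub (deriv φ u) (deriv φ v), hK₁ u, hK₁ v]
  have hminus := abs_deltaMinus_sub_deltaMinus_le hφ (t := t) (fun u => hK₁' u (u - t)) s s'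
  have hplus := abs_deltaPlus_sub_deltaPlus_le hφ (t := t) (fun u => hK₁' u (u + t)) s s'
  calc _ ≤ (2 + α) * |a| * (|deltaMinus φ s t - deltaMinus φ s' t| +
          |deltaPlus φ s t - deltaPlus φ s' t|) := abs_F3_sub_le hα _ _ _ _ _
    _ ≤ (2 + α) * |a| * (2 * K₁ * |s - s'| / |t| + 2 * K₁ * |s - s'| / |t|) :=
        mul_le_mul_of_nonneg_left (add_le_add hminus hplus)
          (mul_nonneg (by linarith) (abs_nonneg a))
    _ = _ := by ring

lemma abs_Phi1Integrand_sub_le (hα : -2 ≤ α) (hφ : Differentiable ℝ φ)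
    (hK₁ : ∀ s, |deriv φ s| ≤ K₁) (hK₂ : ∀ u v, |deriv φ u - deriv φ v| ≤ K₂ * |u - v| ^ β)
    {t : ℝ} (ht : t ≠ 0) (s s' : ℝ) :
    |Phi1Integrand α a φ s t - Phi1Integrand α a φ s' t| ≤
      (2 * K₂ + 4 * (2 + α) * |a| * K₁ * K₂) * |s - s'| * |t| ^ (β - 2 - α) := by
  set A := deltaMinus φ s t + deltaPlus φ s t
  set A' := deltaMinus φ s' t + deltaPlus φ s' t
  set F := F3 α a (deltaMinus φ s t) (deltaPlus φ s t)
  set F' := F3 α a (deltaMinus φ s' t) (deltaPlus φ s' t)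
  set w := |t| ^ (-(1 + α))
  have hA : |A - A'| ≤ 2 * K₂ * |t| ^ β * |s - s'| / |t| :=
    abs_deltaMinus_add_deltaPlus_sub_le hφ hK₂ s s' t
  have hA' : |A'| ≤ K₂ * |t| ^ β := abs_deltaMinus_add_deltaPlus_le_of_holder hφ hK₂ ht s'
  have hw : |t| ^ (β - 2 - α) = |t| ^ β * |t|⁻¹ * w := by
    rw [← rpow_neg_one, ← rpow_add (abs_pos.2 ht), ← rpow_add (abs_pos.2 ht)]; ring_nf
  calc |Phi1Integrand α a φ s t - Phi1Integrand α a φ s' t|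
      = |A * F - A' * F'| * w := by
        rw [Phi1Integrand, Phi1Integrand, ← sub_mul, abs_mul,
          abs_of_nonneg (rpow_nonneg (abs_nonneg t) _)]
    _ = |(A - A') * F + A' * (F - F')| * w := by ring_nf
    _ ≤ (|A - A'| * |F| + |A'| * |F - F'|) * w := by
        gcongr
        simpa only [abs_mul] using abs_add_le ((A - A') * F) (A' * (F - F'))
    _ ≤ (2 * K₂ * |t| ^ β * |s - s'| / |t| * 1 +
          K₂ * |t| ^ β * (4 * (2 + α) * |a| * K₁ * |s - s'| / |t|)) * w := by
        gcongr ?_ * w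
        exact add_le_add
          (mul_le_mul hA (abs_F3_le_one hα _ _ _) (abs_nonneg _) ((abs_nonneg _).trans hA))
          (mul_le_mul hA' (abs_F3_deltas_sub_le hα hφ hK₁ a s s' t) (abs_nonneg _)
            ((abs_nonneg _).trans hA'))
    _ = _ := by rw [hw]; ring

end IntegrandBounds

lemma measurable_Phi1Integrand {φ : ℝ → ℝ} (hφ : Continuous φ) (α a s : ℝ) :
    Measurable (Phi1Integrand α a φ s) := by
  have hF : Measurable fun z : ℝ × ℝ => F3 α a z.1 z.2 := (continuous_F3 α a).measurable
  unfold Phi1Integrand deltaMinus deltaPlus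
  fun_prop

section Phi1Bounds

variable {α β a K₀ K₁ K₂ : ℝ} {φ : ℝ → ℝ}

lemma integrable_Phi1Integrand_and_abs_integral_le (hα : -1 < α) (hαβ : α < β)
    (hφ : Differentiable ℝ φ) (hK₀ : ∀ s, |φ s| ≤ K₀)
    (hK₂ : ∀ u v, |deriv φ u - deriv φ v| ≤ K₂ * |u - v| ^ β) (s : ℝ) :
    Integrable (Phi1Integrand α a φ s) ∧
      |∫ t, Phi1Integrand α a φ s t| ≤ 2 * (K₂ / (β - α) + 4 * K₀ / (1 + α)) := by
  have h := integrable_and_abs_integral_le_of_near_far (c := β - 1 - α) (d := -2 - α)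
    (by linarith) (by linarith) one_pos
    (measurable_Phi1Integrand hφ.continuous α a s).aestronglyMeasurable
    (fun t ht _ => abs_Phi1Integrand_le_of_holder (by linarith) hφ hK₂ ht s)
    (fun t ht => abs_Phi1Integrand_le_of_bounded (by linarith) hK₀
      (abs_pos.1 (one_pos.trans ht)) s)
  refine ⟨h.1, h.2.trans (le_of_eq ?_)⟩
  rw [one_rpow, one_rpow, show β - 1 - α + 1 = β - α by ring,
    show -2 - α + 1 = -(1 + α) by ring, neg_div_neg_eq]
  ring

lemma abs_Phi1_le (hα : -1 < α) (hαβ : α < β) (hφ : Differentiable ℝ φ)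
    (hK₀ : ∀ s, |φ s| ≤ K₀) (hK₂ : ∀ u v, |deriv φ u - deriv φ v| ≤ K₂ * |u - v| ^ β)
    (s : ℝ) : |Phi1 α a φ s| ≤ K₂ / (β - α) + 4 * K₀ / (1 + α) := by
  have h := (integrable_Phi1Integrand_and_abs_integral_le (a := a) hα hαβ hφ hK₀ hK₂ s).2
  rw [Phi1, abs_mul, abs_of_pos (by norm_num : (0:ℝ) < 1 / 2)]
  linarith

lemma abs_Phi1_sub_le (hα : -1 < α) (hαβ : α < β) (hβ : β < 1 + α)
    (hφ : Differentiable ℝ φ) (hK₀ : ∀ s, |φ s| ≤ K₀) (hK₁ : ∀ s, |deriv φ s| ≤ K₁)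
    (hK₂ : ∀ u v, |deriv φ u - deriv φ v| ≤ K₂ * |u - v| ^ β) (s s' : ℝ) :
    |Phi1 α a φ s - Phi1 α a φ s'| ≤
      (2 * K₂ / (β - α) + (2 * K₂ + 4 * (2 + α) * |a| * K₁ * K₂) / (1 + α - β)) *
        |s - s'| ^ (β - α) := by
  rcases eq_or_ne s s' with rfl | hss'
  · simp [zero_rpow (sub_pos.2 hαβ).ne']
  set D := 2 * K₂ + 4 * (2 + α) * |a| * K₁ * K₂
  set r := |s - s'|
  have hr : 0 < r := abs_pos.2 (sub_ne_zero.2 hss')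
  have hint := fun s =>
    (integrable_Phi1Integrand_and_abs_integral_le (a := a) hα hαβ hφ hK₀ hK₂ s).1
  have h := integrable_and_abs_integral_le_of_near_far (c := β - 1 - α) (d := β - 2 - α)
    (g := fun t => Phi1Integrand α a φ s t - Phi1Integrand α a φ s' t)
    (M₁ := 2 * K₂) (M₂ := D * r) (by linarith) (by linarith) hr
    ((hint s).sub (hint s')).aestronglyMeasurable
    (fun t ht _ => (abs_sub _ _).trans (by
      linarith [abs_Phi1Integrand_le_of_holder (α := α) (a := a) (by linarith) hφ hK₂ ht s,
        abs_Phi1Integrand_le_of_holder (α := α) (a := a) (by linarith) hφ hK₂ ht s']))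
    (fun t ht => (abs_Phi1Integrand_sub_le (α := α) (a := a) (by linarith) hφ hK₁ hK₂
        (abs_pos.1 (hr.trans ht)) s s').trans_eq (by ring))
  rw [integral_sub (hint s) (hint s')] at h
  have hrr : r * r ^ (-(1 + α - β)) = r ^ (β - α) := by
    rw [← rpow_one_add' hr.le (by linarith)]; ring_nf
  calc |Phi1 α a φ s - Phi1 α a φ s'|
      = 1 / 2 * |(∫ t, Phi1Integrand α a φ s t) - ∫ t, Phi1Integrand α a φ s' t| := by
        rw [Phi1, Phi1, ← mul_sub, abs_mul, abs_of_pos (by norm_num : (0:ℝ) < 1 / 2)]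
    _ ≤ 1 / 2 * (2 * (2 * K₂ * (r ^ (β - 1 - α + 1) / (β - 1 - α + 1)) +
          D * r * (-r ^ (β - 2 - α + 1) / (β - 2 - α + 1)))) := by gcongr; exact h.2
    _ = _ := by
        rw [show β - 1 - α + 1 = β - α by ring, show β - 2 - α + 1 = -(1 + α - β) by ring,
          div_neg, neg_div, neg_neg, mul_assoc D, ← mul_div_assoc r, hrr]
        ring

end Phi1Bounds

/-- **The quasilinear operator `Φ₁` is well defined and sends `C^{1,β}` into `C^{0,β−α}`.**
For `0 < α < β < 1` and any bound `B`, there is a constant `C` (depending only on `α, β, B`)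
such that: for every `a` and every `2π`-periodic `C^{1,β}` function `φ` with
`|a| + ‖φ‖_{C^{1,β}} ≤ B`, the integrand of `Φ₁(a,φ)(s)` is Lebesgue integrable in `t` for
every `s`, `‖Φ₁(a,φ)‖_∞ ≤ C`, and `|Φ₁(a,φ)(s) − Φ₁(a,φ)(s̄)| ≤ C|s−s̄|^{β−α}` for all `s, s̄`. -/
theorem Phi1_well_defined_and_Holder
    (α β : ℝ) (hα : 0 < α) (hαβ : α < β) (hβ : β < 1) (B : ℝ) :
    ∃ C : ℝ, ∀ (a : ℝ) (φ : ℝ → ℝ) (K₀ K₁ K₂ : ℝ),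
      Function.Periodic φ (2 * π) → ContDiff ℝ 1 φ →
      (∀ s, |φ s| ≤ K₀) → (∀ s, |deriv φ s| ≤ K₁) →
      (∀ s s', |deriv φ s - deriv φ s'| ≤ K₂ * |s - s'| ^ β) →
      |a| + K₀ + K₁ + K₂ ≤ B →
      (∀ s : ℝ, Integrable (fun t : ℝ => Phi1Integrand α a φ s t)) ∧
      (∀ s : ℝ, |Phi1 α a φ s| ≤ C) ∧
      (∀ s s' : ℝ, |Phi1 α a φ s - Phi1 α a φ s'| ≤ C * |s - s'| ^ (β - α)) := by
  have hα' : -1 < α := by linarith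
  have hβ' : β < 1 + α := by linarith
  have hβα : 0 < β - α := by linarith
  have h1α : 0 < 1 + α := by linarith
  have h1αβ : 0 < 1 + α - β := by linarith
  set C_sup := B / (β - α) + 4 * B / (1 + α)
  set C_hol := 2 * B / (β - α) + (2 * B + 4 * (2 + α) * B * B * B) / (1 + α - β)
  refine ⟨C_sup + C_hol, fun a φ K₀ K₁ K₂ _ hφ hK₀ hK₁ hK₂ hB => ?_⟩
  have hφ' : Differentiable ℝ φ := hφ.differentiable one_ne_zero
  have hK₀0 : 0 ≤ K₀ := (abs_nonneg _).trans (hK₀ 0)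
  have hK₁0 : 0 ≤ K₁ := (abs_nonneg _).trans (hK₁ 0)
  have hK₂0 : 0 ≤ K₂ := by simpa using (abs_nonneg _).trans (hK₂ 1 0)
  have ha : 0 ≤ |a| := abs_nonneg a
  have hB0 : 0 ≤ B := by linarith
  have hC_sup : 0 ≤ C_sup := by simp only [C_sup]; positivity
  have hC_hol : 0 ≤ C_hol := by simp only [C_hol]; positivity
  refine ⟨fun s => (integrable_Phi1Integrand_and_abs_integral_le hα' hαβ hφ' hK₀ hK₂ s).1,
    fun s => ?_, fun s s' => ?_⟩
  · calc |Phi1 α a φ s| ≤ K₂ / (β - α) + 4 * K₀ / (1 + α) := abs_Phi1_le hα' hαβ hφ' hK₀ hK₂ s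
      _ ≤ C_sup := by simp only [C_sup]; gcongr <;> linarith
      _ ≤ C_sup + C_hol := le_add_of_nonneg_right hC_hol
  · calc |Phi1 α a φ s - Phi1 α a φ s'|
        ≤ (2 * K₂ / (β - α) + (2 * K₂ + 4 * (2 + α) * |a| * K₁ * K₂) / (1 + α - β)) *
          |s - s'| ^ (β - α) := abs_Phi1_sub_le hα' hαβ hβ' hφ' hK₀ hK₁ hK₂ s s'
      _ ≤ C_hol * |s - s'| ^ (β - α) := by simp only [C_hol]; gcongr <;> linarith
      _ ≤ (C_sup + C_hol) * |s - s'| ^ (β - α) := by gcongr; exact le_add_of_nonneg_left hC_sup
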